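/- Let a : ℝ → ℝ satisfy a(s) = 0 for all s ≤ 0. Then for every p = (x,y,z) ∈ ℝ³, the determinant of the 3×3 matrix whose rows are X̃(p), Ỹ(p), Z̃(p) equals −(x²+y²−z²)·a(x²+y²−z²). In particular, at every point p with a(x²+y²−z²) ≠ 0, the three vectors X̃(p), Ỹ(p), Z̃(p) are linearly independent (the orbit of the perturbed action through p is 3-dimensional). -/
import Mathlib


noncomputable section

/-- The linear vector field `X(x,y,z) = (0,z,y)` on `ℝ³`. -/
def Xf (p : Fin 3 → ℝ) : Fin 3 → ℝ := ![0, p 2, p 1]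

/-- The linear vector field `Y(x,y,z) = (z,0,x)` on `ℝ³`. -/
def Yf (p : Fin 3 → ℝ) : Fin 3 → ℝ := ![p 2, 0, p 0]

/-- The linear vector field `Z(x,y,z) = (−y,x,0)` on `ℝ³`. -/
def Zf (p : Fin 3 → ℝ) : Fin 3 → ℝ := ![-p 1, p 0, 0]

/-- The Lie bracket of vector fields: `[V,W](p) = DW(p)(V(p)) − DV(p)(W(p))`. -/
def lieBr (V W : (Fin 3 → ℝ) → (Fin 3 → ℝ)) (p : Fin 3 → ℝ) : Fin 3 → ℝ :=
  fderiv ℝ W p (V p) - fderiv ℝ V p (W p)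

/-- The radial vector field `R(x,y,z) = (x,y,z)`. -/
def Rf (p : Fin 3 → ℝ) : Fin 3 → ℝ := p

/-- The quadratic form `x² + y² − z²`. -/
def Qf (p : Fin 3 → ℝ) : ℝ := (p 0) ^ 2 + (p 1) ^ 2 - (p 2) ^ 2

/-- `A(x,y,z) = a(x²+y²−z²)/(x²+y²)` when `x²+y² ≠ 0`, and `0` when `x²+y² = 0`. -/
def Afun (a : ℝ → ℝ) (p : Fin 3 → ℝ) : ℝ :=
  if (p 0) ^ 2 + (p 1) ^ 2 = 0 then 0 else a (Qf p) / ((p 0) ^ 2 + (p 1) ^ 2)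

/-- `f = x·A`. -/
def ff (a : ℝ → ℝ) (p : Fin 3 → ℝ) : ℝ := p 0 * Afun a p

/-- `g = −y·A`. -/
def gf (a : ℝ → ℝ) (p : Fin 3 → ℝ) : ℝ := -p 1 * Afun a p

/-- The Cairns–Ghys perturbed field `X̃ = X + f·R`. -/
def Xt (a : ℝ → ℝ) (p : Fin 3 → ℝ) : Fin 3 → ℝ := Xf p + ff a p • Rf p

/-- The Cairns–Ghys perturbed field `Ỹ = Y + g·R`. -/
def Yt (a : ℝ → ℝ) (p : Fin 3 → ℝ) : Fin 3 → ℝ := Yf p + gf a p • Rf p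

/-- The Cairns–Ghys perturbed field `Z̃ = Z`. -/
def Zt (p : Fin 3 → ℝ) : Fin 3 → ℝ := Zf p

/-- If `a` vanishes on `(−∞,0]`, the determinant of the matrix with rows
`X̃(p), Ỹ(p), Z̃(p)` equals `−(x²+y²−z²)·a(x²+y²−z²)`; in particular wherever
`a(x²+y²−z²) ≠ 0` the three perturbed vector fields are linearly independent
(the orbit of the perturbed action is 3-dimensional there). -/
theorem cairnsGhys_determinant
    (a : ℝ → ℝ) (ha0 : ∀ s : ℝ, s ≤ 0 → a s = 0) :
    ∀ p : Fin 3 → ℝ,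
      (Matrix.of ![Xt a p, Yt a p, Zt p]).det = -(Qf p * a (Qf p)) ∧
      (a (Qf p) ≠ 0 → LinearIndependent ℝ ![Xt a p, Yt a p, Zt p]) := by
  intro p
  have hA : Afun a p * ((p 0) ^ 2 + (p 1) ^ 2) = a (Qf p) := by
    unfold Afun
    split_ifs with h
    · have h2 : Qf p ≤ 0 := by
        unfold Qf
        nlinarith [sq_nonneg (p 2)]
      rw [ha0 _ h2]; ring
    · field_simp
  have hdet : (Matrix.of ![Xt a p, Yt a p, Zt p]).det = -(Qf p * a (Qf p)) := by
    rw [Matrix.det_fin_three]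
    simp only [Matrix.of_apply, Matrix.cons_val', Matrix.cons_val_zero, Matrix.cons_val_one,
      Matrix.head_cons, Matrix.empty_val', Matrix.cons_val_fin_one, Matrix.head_fin_const,
      Matrix.cons_val_two, Matrix.tail_cons, Xt, Yt, Zt, Xf, Yf, Zf, Rf, ff, gf, Qf,
      Pi.add_apply, Pi.smul_apply, smul_eq_mul]
    unfold Qf at hA
    nlinarith [hA, sq_nonneg (p 0), sq_nonneg (p 1)]
  refine ⟨hdet, fun hne => ?_⟩
  have hQ : 0 < Qf p := by
    by_contra h
    exact hne (ha0 _ (le_of_not_gt h))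
  have hd : (Matrix.of ![Xt a p, Yt a p, Zt p]).det ≠ 0 := by
    rw [hdet]
    exact neg_ne_zero.mpr (mul_ne_zero (ne_of_gt hQ) hne)
  have := Matrix.linearIndependent_rows_iff_isUnit.mpr
    ((Matrix.isUnit_iff_isUnit_det _).mpr (isUnit_iff_ne_zero.mpr hd))
  exact this
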